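/- Fix a real number n and a positive integer k. For 0 ≤ m ≤ k define q_m(y) = Σ_{l=0}^m (−1)^{m−l} (n/2+l)_{m−l} (k−m)_{m−l} C(m,l) ∏_{j=1}^l [y − j(j−1)], where (a)_0 = 1, (a)_s = a(a+1)⋯(a+s−1), C(m,l) is the binomial coefficient, and the empty product (l = 0) is 1. Then these polynomials satisfy q_0 = 1 and the recursion q_{m+1} = [y − 2m(k−m−n/2) − n(k−1)/2]·q_m − m(m−k)(m−1+n/2)(m−1+n/2−k)·q_{m−1} for 0 ≤ m ≤ k−1 (with q_{−1} := 0). -/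

import Mathlib

open Finset

/-- The Pochhammer symbol `(a)_s = a(a+1)⋯(a+s−1)`, with `(a)_0 = 1`. -/
noncomputable def poch (a : ℝ) (s : ℕ) : ℝ := ∏ i ∈ Finset.range s, (a + (i : ℝ))

/-- The explicit dual-Hahn-type polynomials
`q_m(y) = Σ_{l=0}^m (−1)^{m−l} (n/2+l)_{m−l} (k−m)_{m−l} C(m,l) ∏_{j=1}^l [y − j(j−1)]`. -/
noncomputable def dualHahnQ (n : ℝ) (k : ℕ) (m : ℕ) (y : ℝ) : ℝ :=
  ∑ l ∈ Finset.range (m + 1),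
    (-1 : ℝ)^(m - l) * poch (n/2 + (l : ℝ)) (m - l) * poch ((k : ℝ) - (m : ℝ)) (m - l)
      * (Nat.choose m l : ℝ) * ∏ j ∈ Finset.Icc 1 l, (y - (j : ℝ) * ((j : ℝ) - 1))

/-!
Expand `q_m` in the basis `B_l(y) = ∏_{j=1}^l (y - j(j-1))`, on which multiplication by `y` acts
by `y B_l = B_{l+1} + l(l+1) B_l`. The recursion then amounts to a three-term identity for the
coefficients `c_{m,l}`. Written as `c_{m,l} = C(m,l) ∏_{i=l}^{m-1} (n/2+i)(i+1-k)`, all terms of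
that identity share the product `∏_{i=l+1}^{m-1}`, and what is left is a relation between
binomial coefficients. The coefficient of `q_{m-1}` carries the factor `m`, so `m = 0` needs no
separate treatment.
-/

lemma neg_one_pow_mul_poch_sub (x : ℝ) (s : ℕ) :
    (-1) ^ s * poch (x - s) s = ∏ i ∈ range s, ((i : ℝ) + 1 - x) := by
  rw [poch, ← prod_range_reflect, ← card_range s, ← prod_const, card_range,
    ← prod_mul_distrib]
  refine prod_congr rfl fun i hi => ?_
  rw [Nat.cast_sub (by simp at hi; omega), Nat.cast_sub (by simp at hi; omega)]
  push_cast
  ring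

namespace DualHahn

variable (n : ℝ) (k : ℕ)

noncomputable def basis (y : ℝ) (l : ℕ) : ℝ :=
  ∏ j ∈ Icc 1 l, (y - (j : ℝ) * ((j : ℝ) - 1))

lemma mul_basis (y : ℝ) (l : ℕ) :
    y * basis y l = basis y (l + 1) + ((l : ℝ) + 1) * l * basis y l := by
  rw [basis, basis, prod_Icc_succ_top (by omega)]
  push_cast
  ring

lemma sum_basis_recursion {c₀ c₁ c₂ : ℕ → ℝ} {α β : ℝ} (N : ℕ) (y : ℝ)
    (h_zero : c₂ 0 = -α * c₁ 0 - β * c₀ 0)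
    (h_succ : ∀ l, c₂ (l + 1) =
      c₁ l + (((l : ℝ) + 1) * (l + 2) - α) * c₁ (l + 1) - β * c₀ (l + 1))
    (hN : c₁ N = 0) :
    ∑ l ∈ range (N + 1), c₂ l * basis y l =
      (y - α) * ∑ l ∈ range (N + 1), c₁ l * basis y l
        - β * ∑ l ∈ range (N + 1), c₀ l * basis y l := by
  have h_raise : y * ∑ l ∈ range (N + 1), c₁ l * basis y l =
      ∑ l ∈ range N, c₁ l * basis y (l + 1)
        + ∑ l ∈ range (N + 1), ((l : ℝ) + 1) * l * c₁ l * basis y l := by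
    have h_top : ∑ l ∈ range (N + 1), c₁ l * basis y (l + 1) =
        ∑ l ∈ range N, c₁ l * basis y (l + 1) := by
      rw [sum_range_succ, hN, zero_mul, add_zero]
    rw [← h_top, ← sum_add_distrib, mul_sum]
    exact sum_congr rfl fun l _ => by
      linear_combination c₁ l * mul_basis y l
  have h_shift : ∑ l ∈ range (N + 1), c₂ l * basis y l =
      ∑ l ∈ range N, c₁ l * basis y (l + 1)
        + ∑ l ∈ range (N + 1),
            ((((l : ℝ) + 1) * l - α) * c₁ l - β * c₀ l) * basis y l := by
    rw [sum_range_succ', sum_range_succ' (fun l => _ * basis y l), ← add_assoc,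
      ← sum_add_distrib, h_zero]
    push_cast
    congr 1
    · exact sum_congr rfl fun l _ => by rw [h_succ]; ring
    · ring
  rw [h_shift, sub_mul, h_raise, mul_sum, mul_sum, add_sub_assoc, add_sub_assoc,
    ← sum_sub_distrib, ← sum_sub_distrib]
  exact congrArg _ (sum_congr rfl fun l _ => by ring)

noncomputable def factor (i : ℕ) : ℝ := (n / 2 + i) * (i + 1 - k)

noncomputable def coeff (m l : ℕ) : ℝ := m.choose l * ∏ i ∈ Ico l m, factor n k i

lemma poch_mul_choose_eq_coeff (m l : ℕ) :
    (-1 : ℝ) ^ (m - l) * poch (n / 2 + l) (m - l) * poch (k - m) (m - l) * m.choose l =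
      coeff n k m l := by
  obtain hml | hlm := lt_or_ge m l
  · simp [coeff, Nat.choose_eq_zero_of_lt hml]
  obtain ⟨s, rfl⟩ := Nat.exists_eq_add_of_le hlm
  have hk : (k : ℝ) - ((l + s : ℕ) : ℝ) = ((k : ℝ) - l) - s := by push_cast; ring
  have hfactor : ∏ i ∈ range s, factor n k (l + i) =
      poch (n / 2 + l) s * ∏ i ∈ range s, ((i : ℝ) + 1 - (k - l)) := by
    rw [poch, ← prod_mul_distrib]
    refine prod_congr rfl fun i _ => ?_
    rw [factor]
    push_cast
    ring
  rw [coeff, prod_Ico_eq_prod_range, Nat.add_sub_cancel_left, hk, hfactor,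
    ← neg_one_pow_mul_poch_sub]
  ring

lemma choose_recursion (p l : ℕ) (hlp : l ≤ p) :
    ((p + 2).choose (l + 1) : ℝ) * factor n k (p + 1) =
      (p + 1).choose l * factor n k l
        + (((l : ℝ) + 1) * (l + 2)
            - (2 * ((p : ℝ) + 1) * (k - (p + 1) - n / 2) + n * (k - 1) / 2))
          * (p + 1).choose (l + 1)
        - ((p : ℝ) + 1) * (p + n / 2 - k) * p.choose (l + 1) := by
  obtain ⟨s, rfl⟩ := Nat.exists_eq_add_of_le hlp
  have top : ((l + s + 2).choose (l + 1) : ℝ) * (s + 1) =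
      (l + s + 1).choose (l + 1) * (l + s + 2) := by
    have := Nat.choose_mul_succ_eq (l + s + 1) (l + 1)
    rw [show l + s + 1 + 1 - (l + 1) = s + 1 by omega] at this
    exact_mod_cast this.symm
  have left : ((l + s + 1).choose l : ℝ) * (s + 1) = (l + s + 1).choose (l + 1) * (l + 1) := by
    have := Nat.choose_succ_right_eq (l + s + 1) l
    rw [show l + s + 1 - l = s + 1 by omega] at this
    exact_mod_cast this.symm
  have below : ((l + s).choose (l + 1) : ℝ) * (l + s + 1) = (l + s + 1).choose (l + 1) * s := by
    have := Nat.choose_mul_succ_eq (l + s) (l + 1)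
    rw [show l + s + 1 - (l + 1) = s by omega] at this
    exact_mod_cast this
  refine mul_right_cancel₀ (b := (s : ℝ) + 1) (by positivity) ?_
  simp only [factor]
  push_cast
  linear_combination (n / 2 + (l + s + 1)) * (l + s + 2 - k) * top
    - (n / 2 + l) * (l + 1 - k) * left + (s + 1) * (l + s + n / 2 - k) * below

lemma coeff_eq_zero_of_lt {m l : ℕ} (h : m < l) : coeff n k m l = 0 := by
  simp [coeff, Nat.choose_eq_zero_of_lt h]

lemma mul_coeff_pred (m j : ℕ) :
    (m : ℝ) * (m - k) * (m - 1 + n / 2) * (m - 1 + n / 2 - k) * coeff n k (m - 1) j =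
      (m : ℝ) * (m - 1 + n / 2 - k) * (m - 1).choose j * ∏ i ∈ Ico j m, factor n k i := by
  rcases m with _ | p
  · simp
  by_cases hjp : j ≤ p
  · rw [Nat.add_sub_cancel, coeff, prod_Ico_succ_top hjp, factor]
    push_cast
    ring
  · simp [coeff, Nat.choose_eq_zero_of_lt (not_le.mp hjp)]

lemma coeff_succ_zero (m : ℕ) :
    coeff n k (m + 1) 0 =
      -(2 * (m : ℝ) * (k - m - n / 2) + n * (k - 1) / 2) * coeff n k m 0
        - (m : ℝ) * (m - k) * (m - 1 + n / 2) * (m - 1 + n / 2 - k) * coeff n k (m - 1) 0 := by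
  rw [mul_coeff_pred, coeff, coeff, prod_Ico_succ_top (Nat.zero_le m), factor]
  simp only [Nat.choose_zero_right, Nat.cast_one]
  ring

lemma coeff_succ_succ (m l : ℕ) :
    coeff n k (m + 1) (l + 1) =
      coeff n k m l
        + (((l : ℝ) + 1) * (l + 2) - (2 * (m : ℝ) * (k - m - n / 2) + n * (k - 1) / 2))
          * coeff n k m (l + 1)
        - (m : ℝ) * (m - k) * (m - 1 + n / 2) * (m - 1 + n / 2 - k)
          * coeff n k (m - 1) (l + 1) := by
  obtain hml | hlm := le_or_gt m l
  · rw [coeff_eq_zero_of_lt n k (Nat.lt_succ_of_le hml),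
      coeff_eq_zero_of_lt n k (m := m - 1) (by omega), coeff, coeff, Nat.choose_succ_succ',
      Nat.choose_eq_zero_of_lt (Nat.lt_succ_of_le hml), add_zero, Ico_eq_empty (by omega),
      Ico_eq_empty (by omega)]
    ring
  obtain ⟨p, rfl⟩ : ∃ p, m = p + 1 := ⟨m - 1, by omega⟩
  rw [mul_coeff_pred]
  simp only [coeff]
  rw [prod_Ico_succ_top (by omega), prod_eq_prod_Ico_succ_bot hlm]
  push_cast
  linear_combination
    (∏ i ∈ Ico (l + 1) (p + 1), factor n k i) * choose_recursion n k p l (by omega)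

lemma dualHahnQ_eq_sum {m N : ℕ} (hmN : m < N) (y : ℝ) :
    dualHahnQ n k m y = ∑ l ∈ range N, coeff n k m l * basis y l := by
  simp only [dualHahnQ, poch_mul_choose_eq_coeff]
  refine sum_subset (range_subset_range.mpr hmN) fun l _ hl => ?_
  rw [coeff_eq_zero_of_lt n k (by simpa using hl), zero_mul]

end DualHahn

theorem dualHahnQ_satisfies_recursion_general
    (n : ℝ) (k : ℕ) :
    (∀ y : ℝ, dualHahnQ n k 0 y = 1) ∧
    (∀ m : ℕ, m < k → ∀ y : ℝ,
      dualHahnQ n k (m + 1) y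
        = (y - 2 * (m : ℝ) * ((k : ℝ) - (m : ℝ) - n/2) - n * ((k : ℝ) - 1)/2)
            * dualHahnQ n k m y
          - (m : ℝ) * ((m : ℝ) - (k : ℝ)) * ((m : ℝ) - 1 + n/2)
              * ((m : ℝ) - 1 + n/2 - (k : ℝ)) * dualHahnQ n k (m - 1) y) := by
  refine ⟨fun y => by simp [dualHahnQ, poch], fun m _ y => ?_⟩
  rw [DualHahn.dualHahnQ_eq_sum n k (N := m + 2) (by omega),
    DualHahn.dualHahnQ_eq_sum n k (N := m + 2) (by omega),
    DualHahn.dualHahnQ_eq_sum n k (N := m + 2) (by omega), sub_sub]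
  exact DualHahn.sum_basis_recursion (m + 1) y (DualHahn.coeff_succ_zero n k m)
    (DualHahn.coeff_succ_succ n k m) (DualHahn.coeff_eq_zero_of_lt n k m.lt_succ_self)

/-- The explicitly defined polynomials `q_m` satisfy `q_0 = 1` and
the recursion
`q_{m+1} = [y − 2m(k−m−n/2) − n(k−1)/2] q_m − m(m−k)(m−1+n/2)(m−1+n/2−k) q_{m−1}`
for `0 ≤ m ≤ k−1` (with `q_{−1} := 0`; the `q_{−1}` term carries the coefficient
`m`, which vanishes when `m = 0`, so it never contributes). -/
theorem dualHahnQ_satisfies_recursion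
    (n : ℝ) (k : ℕ) (hk : 1 ≤ k) :
    (∀ y : ℝ, dualHahnQ n k 0 y = 1) ∧
    (∀ m : ℕ, m < k → ∀ y : ℝ,
      dualHahnQ n k (m + 1) y
        = (y - 2 * (m : ℝ) * ((k : ℝ) - (m : ℝ) - n/2) - n * ((k : ℝ) - 1)/2)
            * dualHahnQ n k m y
          - (m : ℝ) * ((m : ℝ) - (k : ℝ)) * ((m : ℝ) - 1 + n/2)
              * ((m : ℝ) - 1 + n/2 - (k : ℝ)) * dualHahnQ n k (m - 1) y) :=
  dualHahnQ_satisfies_recursion_general n k
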